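/- For the instanton connection ρ on O(S^4_θ) ⊂ O(S^7_θ) and the conformal generators 𝒯_σ of so_θ(5,1), the variation of the curvature on the generators of Der(O(S^4_θ)) is (δ_σ Ω)(T_μ, T_ν) = −2 b_σ Ω(T_μ, T_ν) − T_σ(b_μ) ω(𝒯_ν) + λ^{2μ∧ν} T_σ(b_ν) ω(𝒯_μ), where δ_σ Ω(T_μ,T_ν) = [𝒯_σ, Ω(T_μ,T_ν)] − Ω([T_σ,T_μ], T_ν) + λ^{2μ∧ν} Ω([T_σ,T_ν], T_μ). -/

import Mathlib

/-!
Write `ℓ x` for left multiplication by `x` and `[D, X]_r = D X − r X D` for the braided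
commutator, which obeys a braided Leibniz rule in `X`. By the sphere relation
`Σ_γ b_γ* b_γ = 1`, `Y_{μ,ν} = L_{μ,ν} − b_μ ρ(T_ν) + λ^{2μ∧ν} b_ν ρ(T_μ)`, so the curvature is
expressed through `L` and the connection alone. The bracket of `𝒯_σ` with `b_a` is `T_σ(b_a)`
(its Leibniz rule) and with `L_{a,c}` is given by the `so_θ(5,1)` relations; summing them against
`b_γ*` and using `Σ_τ b_τ* 𝒯_τ = 0` gives `[𝒯_σ, ρ(T_c)] = L_{σ,c} + b_σ ω(𝒯_c)`. The variation
of the curvature then follows from the Leibniz rule for the bracket and the braided commutativity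
of the `b`'s.
-/

noncomputable section

open scoped BigOperators

namespace Statement10

def V : Finset (ℤ × ℤ) := {(0,0), (1,0), (-1,0), (0,1), (0,-1)}

def wedge (p r : ℤ × ℤ) : ℤ := p.1 * r.2 - p.2 * r.1

/-- `λ^{2 μ∧ν}` with `λ = e^{−πiθ}` -/
def q (θ : ℝ) (p r : ℤ × ℤ) : ℂ :=
  Complex.exp (-((Real.pi : ℂ) * Complex.I) * (θ : ℂ) * ((2 * wedge p r : ℤ) : ℂ))

/-- the doubled weight `2μ` (the generators `z_r` of `O(S^7_θ)` have
half-integral weights, so the grading uses doubled weights) -/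
def dbl (p : ℤ × ℤ) : ℤ × ℤ := (2 * p.1, 2 * p.2)

/-- the braiding factor between homogeneous elements of (doubled) weights
`m`, `m'`; on the subalgebra `O(S^4_θ)`, `Q7 θ (dbl μ) (dbl ν) = λ^{2μ∧ν}`. -/
def Q7 (θ : ℝ) (m m' : ℤ × ℤ) : ℂ :=
  Complex.exp (-((Real.pi : ℂ) * Complex.I) * (θ : ℂ) * (((wedge m m' : ℤ) : ℂ) / 2))

lemma q_mul_q_of_wedge {θ : ℝ} {a b c d e f : ℤ × ℤ} (h : wedge a b + wedge c d = wedge e f) :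
    q θ a b * q θ c d = q θ e f := by
  simp only [q, ← Complex.exp_add, ← h]
  push_cast
  ring_nf

lemma q_eq_of_wedge {θ : ℝ} {a b e f : ℤ × ℤ} (h : wedge a b = wedge e f) : q θ a b = q θ e f := by
  rw [q, h, q]

lemma q_self (θ : ℝ) (a : ℤ × ℤ) : q θ a a = 1 := by
  simp [q, wedge, mul_comm a.1]

lemma q_mul_q_swap (θ : ℝ) (a b : ℤ × ℤ) : q θ a b * q θ b a = 1 := by
  rw [q_mul_q_of_wedge (e := a) (f := a) (by unfold wedge; ring), q_self]

lemma q_neg_left (θ : ℝ) (a b : ℤ × ℤ) : q θ (-a) b = q θ b a :=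
  q_eq_of_wedge (by simp only [wedge, Prod.fst_neg, Prod.snd_neg]; ring)

lemma q_neg_right (θ : ℝ) (a b : ℤ × ℤ) : q θ a (-b) = q θ b a :=
  q_eq_of_wedge (by simp only [wedge, Prod.fst_neg, Prod.snd_neg]; ring)

lemma q_add_left (θ : ℝ) (a b c : ℤ × ℤ) : q θ (a + b) c = q θ a c * q θ b c :=
  (q_mul_q_of_wedge (by simp only [wedge, Prod.fst_add, Prod.snd_add]; ring)).symm

lemma q_add_right (θ : ℝ) (a b c : ℤ × ℤ) : q θ a (b + c) = q θ a b * q θ a c :=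
  (q_mul_q_of_wedge (by simp only [wedge, Prod.fst_add, Prod.snd_add]; ring)).symm

lemma Q7_dbl (θ : ℝ) (a b : ℤ × ℤ) : Q7 θ (dbl a) (dbl b) = q θ a b := by
  simp only [Q7, q, dbl, wedge]
  push_cast
  ring_nf

lemma neg_mem_V : ∀ {p : ℤ × ℤ}, p ∈ V → -p ∈ V := by
  decide

section BraidedCommutator

variable {R : Type*} [Ring R] [Algebra ℂ R]

def braidedComm (r : ℂ) (d : R) : R →ₗ[ℂ] R := LinearMap.mulLeft ℂ d - r • LinearMap.mulRight ℂ d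

lemma braidedComm_apply (r : ℂ) (d x : R) : braidedComm r d x = d * x - r • (x * d) := rfl

lemma braidedComm_mul (r s : ℂ) (d x y : R) :
    braidedComm (r * s) d (x * y) = braidedComm r d x * y + r • (x * braidedComm s d y) := by
  simp only [braidedComm_apply, sub_mul, mul_sub, smul_mul_assoc, mul_smul_comm, mul_assoc,
    smul_sub, smul_smul]
  abel

lemma braidedComm_eq_neg_smul_braidedComm_swap {r r' : ℂ} (h : r * r' = 1) (d x : R) :
    braidedComm r d x = -r • braidedComm r' x d := by
  simp only [braidedComm_apply, smul_sub, smul_smul, h, one_smul, neg_smul, neg_mul]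
  abel

end BraidedCommutator

section Instanton

variable {A : Type*} [Ring A] [Algebra ℂ A] {θ : ℝ} {b : ℤ × ℤ → A}
  {L : ℤ × ℤ → ℤ × ℤ → Module.End ℂ A} {Tc : ℤ × ℤ → Module.End ℂ A}

local notation "ℓ" => Algebra.lmul ℂ A

lemma mulLeft_eq_lmul (x : A) : LinearMap.mulLeft ℂ x = ℓ x := rfl

def connection (b : ℤ × ℤ → A) (L : ℤ × ℤ → ℤ × ℤ → Module.End ℂ A) (ν : ℤ × ℤ) :
    Module.End ℂ A :=
  ∑ μ ∈ V, ℓ (b (-μ)) * L μ ν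

def curvature (θ : ℝ) (b : ℤ × ℤ → A) (L : ℤ × ℤ → ℤ × ℤ → Module.End ℂ A) (μ ν : ℤ × ℤ) :
    Module.End ℂ A :=
  ℓ (b μ) * connection b L ν - q θ μ ν • (ℓ (b ν) * connection b L μ) - L μ ν

lemma lmul_mul_lmul_mul_swap (hcomm : ∀ μ ∈ V, ∀ ν ∈ V, b μ * b ν = q θ μ ν • (b ν * b μ))
    {a c : ℤ × ℤ} (ha : a ∈ V) (hc : c ∈ V) (X : Module.End ℂ A) :
    ℓ (b a) * (ℓ (b c) * X) = q θ a c • (ℓ (b c) * (ℓ (b a) * X)) := by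
  rw [← mul_assoc, ← map_mul, hcomm a ha c hc, map_smul, map_mul, smul_mul_assoc, mul_assoc]

lemma sum_lmul_eq_L_sub_lmul_connection (hsph : ∑ μ ∈ V, b (-μ) * b μ = 1)
    (hcomm : ∀ μ ∈ V, ∀ ν ∈ V, b μ * b ν = q θ μ ν • (b ν * b μ))
    {a c : ℤ × ℤ} (ha : a ∈ V) (hc : c ∈ V) :
    ∑ γ ∈ V, ℓ (b (-γ)) * (ℓ (b γ) * L a c - q θ γ a • (ℓ (b a) * L γ c)
      + q θ (γ + a) c • (ℓ (b c) * L γ a))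
      = L a c - ℓ (b a) * connection b L c + q θ a c • (ℓ (b c) * connection b L a) := by
  have hterm : ∀ γ ∈ V, ℓ (b (-γ)) * (ℓ (b γ) * L a c - q θ γ a • (ℓ (b a) * L γ c)
      + q θ (γ + a) c • (ℓ (b c) * L γ a))
      = ℓ (b (-γ) * b γ) * L a c - ℓ (b a) * (ℓ (b (-γ)) * L γ c)
        + q θ a c • (ℓ (b c) * (ℓ (b (-γ)) * L γ a)) := by
    intro γ hγ
    have hγ' := neg_mem_V hγ
    have hqa : q θ γ a * q θ (-γ) a = 1 := by rw [q_neg_left, q_mul_q_swap]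
    have hqc : q θ (γ + a) c * q θ (-γ) c = q θ a c := by
      rw [q_neg_left, q_add_left, mul_right_comm, q_mul_q_swap, one_mul]
    rw [mul_add, mul_sub, mul_smul_comm, mul_smul_comm, ← mul_assoc, ← map_mul,
      lmul_mul_lmul_mul_swap hcomm hγ' ha, lmul_mul_lmul_mul_swap hcomm hγ' hc, smul_smul,
      smul_smul, hqa, hqc, one_smul]
  rw [connection, connection, Finset.sum_congr rfl hterm, Finset.sum_add_distrib,
    Finset.sum_sub_distrib, ← Finset.sum_mul, ← map_sum, hsph, map_one, one_mul, ← Finset.mul_sum,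
    ← Finset.smul_sum, ← Finset.mul_sum]

lemma q_smul_curvature_swap (hanti : ∀ μ ∈ V, ∀ ν ∈ V, L μ ν = -(q θ μ ν) • L ν μ)
    {a c : ℤ × ℤ} (ha : a ∈ V) (hc : c ∈ V) :
    q θ a c • curvature θ b L c a = -curvature θ b L a c := by
  simp only [curvature, hanti a ha c hc, smul_sub, smul_smul, q_mul_q_swap, one_smul]
  module

lemma braidedComm_lmul_of_leibniz {D : Module.End ℂ A} {x : A} {r : ℂ}
    (h : ∀ y, D (x * y) = D x * y + r • (x * D y)) : braidedComm r D (ℓ x) = ℓ (D x) := by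
  ext y
  simp [braidedComm_apply, h]

lemma braidedComm_Tc_lmul_b (𝒜 : ℤ × ℤ → Submodule ℂ A) (hb : ∀ μ ∈ V, b μ ∈ 𝒜 (dbl μ))
    (hTcLeib : ∀ σ ∈ V, ∀ (m : ℤ × ℤ) (x y : A), x ∈ 𝒜 m →
      Tc σ (x * y) = Tc σ x * y + Q7 θ (dbl σ) m • (x * Tc σ y))
    {σ a : ℤ × ℤ} (hσ : σ ∈ V) (ha : a ∈ V) :
    braidedComm (q θ σ a) (Tc σ) (ℓ (b a)) = ℓ (Tc σ (b a)) :=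
  braidedComm_lmul_of_leibniz fun y => by rw [hTcLeib σ hσ _ _ y (hb a ha), Q7_dbl]

lemma lmul_Tc_b (hTcval : ∀ σ ∈ V, ∀ τ ∈ V, Tc σ (b τ) = (if σ = -τ then 1 else 0) - b σ * b τ)
    {σ a : ℤ × ℤ} (hσ : σ ∈ V) (ha : a ∈ V) :
    ℓ (Tc σ (b a)) = (if σ = -a then (1 : ℂ) else 0) • 1 - ℓ (b σ) * ℓ (b a) := by
  rw [hTcval σ hσ a ha, map_sub, map_mul]
  split_ifs <;> simp only [map_one, map_zero, one_smul, zero_smul]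

lemma braidedComm_Tc_L (hLT : ∀ μ ∈ V, ∀ ν ∈ V, ∀ σ ∈ V,
      L μ ν ∘ₗ Tc σ - q θ (μ + ν) σ • (Tc σ ∘ₗ L μ ν)
        = (if σ = -ν then (1:ℂ) else 0) • Tc μ
          - q θ μ ν • ((if σ = -μ then (1:ℂ) else 0) • Tc ν))
    {σ a c : ℤ × ℤ} (hσ : σ ∈ V) (ha : a ∈ V) (hc : c ∈ V) :
    braidedComm (q θ σ (a + c)) (Tc σ) (L a c)
      = (if σ = -a then (1 : ℂ) else 0) • Tc c
        - q θ a c • ((if σ = -c then (1 : ℂ) else 0) • Tc a) := by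
  have e1 : q θ σ (a + c) * (if σ = -c then 1 else 0) = q θ a c * if σ = -c then 1 else 0 := by
    split_ifs with h
    · rw [h, mul_one, mul_one, q_add_right, q_neg_left, q_neg_left, q_self, mul_one]
    · rw [mul_zero, mul_zero]
  have e2 : q θ σ (a + c) * (q θ a c * (if σ = -a then 1 else 0)) = if σ = -a then 1 else 0 := by
    split_ifs with h
    · rw [h, mul_one, q_add_right, q_neg_left, q_neg_left, q_self, one_mul, q_mul_q_swap]
    · rw [mul_zero, mul_zero]
  have h := hLT a ha c hc σ hσ
  rw [← Module.End.mul_eq_comp, ← Module.End.mul_eq_comp] at h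
  rw [braidedComm_eq_neg_smul_braidedComm_swap (q_mul_q_swap θ σ (a + c)), braidedComm_apply, h]
  simp only [smul_sub, smul_smul, neg_mul, neg_smul, e1, e2]
  abel

lemma braidedComm_Tc_lmul_neg_mul_L {σ γ c : ℤ × ℤ}
    (hTb : braidedComm (q θ σ (-γ)) (Tc σ) (ℓ (b (-γ)))
      = (if σ = -(-γ) then (1 : ℂ) else 0) • 1 - ℓ (b σ) * ℓ (b (-γ)))
    (hTL : braidedComm (q θ σ (γ + c)) (Tc σ) (L γ c)
      = (if σ = -γ then (1 : ℂ) else 0) • Tc c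
        - q θ γ c • ((if σ = -c then (1 : ℂ) else 0) • Tc γ)) :
    braidedComm (q θ σ c) (Tc σ) (ℓ (b (-γ)) * L γ c)
      = (if σ = γ then (1 : ℂ) else 0) • L γ c - ℓ (b σ) * (ℓ (b (-γ)) * L γ c)
        + (if γ = -σ then (1 : ℂ) else 0) • (ℓ (b (-γ)) * Tc c)
        - (if σ = -c then (1 : ℂ) else 0) • (ℓ (b (-γ)) * Tc γ) := by
  have e0 : q θ σ c = q θ σ (-γ) * q θ σ (γ + c) := by
    rw [q_add_right, q_neg_right, ← mul_assoc, q_mul_q_swap, one_mul]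
  have e1 : q θ σ (-γ) * (if σ = -γ then 1 else 0) = if γ = -σ then 1 else 0 := by
    by_cases h : γ = -σ
    · rw [if_pos (by rw [h, neg_neg]), if_pos h, h, neg_neg, q_self, mul_one]
    · rw [if_neg (fun h' => h (by rw [h', neg_neg])), if_neg h, mul_zero]
  have e2 : q θ σ (-γ) * (q θ γ c * if σ = -c then 1 else 0) = if σ = -c then 1 else 0 := by
    split_ifs with h
    · rw [h, mul_one, q_neg_left, q_neg_left, q_mul_q_swap]
    · rw [mul_zero, mul_zero]
  rw [e0, braidedComm_mul, hTb, hTL, neg_neg]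
  simp only [sub_mul, smul_mul_assoc, one_mul, mul_assoc, mul_sub, mul_smul_comm, smul_sub,
    smul_smul, e1, e2]
  abel

lemma braidedComm_Tc_connection {σ c : ℤ × ℤ} (hσ : σ ∈ V) (hc : c ∈ V)
    (hTb : ∀ a ∈ V, braidedComm (q θ σ a) (Tc σ) (ℓ (b a))
      = (if σ = -a then (1 : ℂ) else 0) • 1 - ℓ (b σ) * ℓ (b a))
    (hTL : ∀ a ∈ V, ∀ c ∈ V, braidedComm (q θ σ (a + c)) (Tc σ) (L a c)
      = (if σ = -a then (1 : ℂ) else 0) • Tc c - q θ a c • ((if σ = -c then (1 : ℂ) else 0) • Tc a))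
    (hTcsum : ∑ τ ∈ V, ℓ (b (-τ)) * Tc τ = 0) :
    braidedComm (q θ σ c) (Tc σ) (connection b L c)
      = L σ c + ℓ (b σ) * (Tc c - connection b L c) := by
  rw [connection, map_sum, Finset.sum_congr rfl fun γ hγ =>
    braidedComm_Tc_lmul_neg_mul_L (hTb _ (neg_mem_V hγ)) (hTL γ hγ c hc)]
  simp only [Finset.sum_sub_distrib, Finset.sum_add_distrib, ← Finset.smul_sum, hTcsum,
    smul_zero, sub_zero]
  simp only [ite_smul, one_smul, zero_smul, Finset.sum_ite_eq, Finset.sum_ite_eq', if_pos hσ,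
    if_pos (neg_mem_V hσ), neg_neg, ← Finset.mul_sum, mul_sub]
  abel

lemma curvature_variation {σ μ ν : ℤ × ℤ} (hσ : σ ∈ V) (hμ : μ ∈ V) (hν : ν ∈ V)
    (hcomm : ∀ μ ∈ V, ∀ ν ∈ V, b μ * b ν = q θ μ ν • (b ν * b μ))
    (hanti : ∀ μ ∈ V, ∀ ν ∈ V, L μ ν = -(q θ μ ν) • L ν μ)
    (hTb : ∀ a ∈ V, braidedComm (q θ σ a) (Tc σ) (ℓ (b a))
      = (if σ = -a then (1 : ℂ) else 0) • 1 - ℓ (b σ) * ℓ (b a))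
    (hTL : ∀ a ∈ V, ∀ c ∈ V, braidedComm (q θ σ (a + c)) (Tc σ) (L a c)
      = (if σ = -a then (1 : ℂ) else 0) • Tc c - q θ a c • ((if σ = -c then (1 : ℂ) else 0) • Tc a))
    (hTcsum : ∑ τ ∈ V, ℓ (b (-τ)) * Tc τ = 0) :
    braidedComm (q θ σ (μ + ν)) (Tc σ) (curvature θ b L μ ν)
        - (ℓ (b σ) * curvature θ b L μ ν - q θ σ μ • (ℓ (b μ) * curvature θ b L σ ν))
        + q θ μ ν • (ℓ (b σ) * curvature θ b L ν μ - q θ σ ν • (ℓ (b ν) * curvature θ b L σ μ))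
      = (-2 : ℂ) • (ℓ (b σ) * curvature θ b L μ ν)
        - ((if σ = -μ then (1 : ℂ) else 0) • 1 - ℓ (b σ) * ℓ (b μ)) * (Tc ν - connection b L ν)
        + q θ μ ν • (((if σ = -ν then (1 : ℂ) else 0) • 1 - ℓ (b σ) * ℓ (b ν))
          * (Tc μ - connection b L μ)) := by
  have hbc : braidedComm (q θ σ (μ + ν)) (Tc σ) (curvature θ b L μ ν)
      = braidedComm (q θ σ μ * q θ σ ν) (Tc σ) (ℓ (b μ) * connection b L ν)
        - q θ μ ν • braidedComm (q θ σ ν * q θ σ μ) (Tc σ) (ℓ (b ν) * connection b L μ)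
        - braidedComm (q θ σ (μ + ν)) (Tc σ) (L μ ν) := by
    rw [curvature, map_sub, map_sub, map_smul, q_add_right, mul_comm (q θ σ ν)]
  have hswap : q θ μ ν • (ℓ (b σ) * curvature θ b L ν μ) = -(ℓ (b σ) * curvature θ b L μ ν) := by
    rw [← mul_smul_comm, q_smul_curvature_swap hanti hμ hν]
    exact mul_neg (ℓ (b σ)) _
  rw [smul_sub, hswap, hbc, hTL μ hμ ν hν, braidedComm_mul, braidedComm_mul, hTb μ hμ, hTb ν hν,
    braidedComm_Tc_connection hσ hμ hTb hTL hTcsum, braidedComm_Tc_connection hσ hν hTb hTL hTcsum]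
  simp only [curvature]
  -- the terms in `ρ(T_σ)` cancel only after reordering `b_μ b_ν` into `b_ν b_μ`
  simp only [sub_mul, mul_add, mul_sub, smul_mul_assoc, mul_smul_comm, one_mul, mul_assoc,
    lmul_mul_lmul_mul_swap hcomm hσ hμ, lmul_mul_lmul_mul_swap hcomm hσ hν,
    lmul_mul_lmul_mul_swap hcomm hμ hν]
  module

end Instanton

theorem conformal_variation_of_curvature_general
    (θ : ℝ)
    (A : Type*) [Ring A] [Algebra ℂ A]
    (𝒜 : ℤ × ℤ → Submodule ℂ A)
    -- generators `b_μ` of the coinvariant subalgebra `O(S^4_θ)` (`b_μ* = b_{−μ}`)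
    (b : ℤ × ℤ → A)
    (hb : ∀ μ ∈ V, b μ ∈ 𝒜 (dbl μ))
    (hcomm : ∀ μ ∈ V, ∀ ν ∈ V, b μ * b ν = q θ μ ν • (b ν * b μ))
    (hsph : ∑ μ ∈ V, b (-μ) * b μ = 1)
    -- the `O(SU(2))`-equivariant braided derivations `L_{μ,ν}` of `O(S^7_θ)`
    (L : ℤ × ℤ → ℤ × ℤ → Module.End ℂ A)
    (hanti : ∀ μ ∈ V, ∀ ν ∈ V, L μ ν = -(q θ μ ν) • L ν μ)
    -- the horizontal lifts `ρ(T_ν) := Σ_μ b_μ* L_{μ,ν}`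
    (rhoT : ℤ × ℤ → Module.End ℂ A)
    (hrho : ∀ ν, rhoT ν = ∑ μ ∈ V, (LinearMap.mulLeft ℂ (b (-μ))) ∘ₗ L μ ν)
    -- the vertical (gauge) generators `Y_{μ,ν}`
    (Y : ℤ × ℤ → ℤ × ℤ → Module.End ℂ A)
    (hYdef : ∀ μ ν, Y μ ν = ∑ γ ∈ V,
      (LinearMap.mulLeft ℂ (b (-γ))) ∘ₗ
        ((LinearMap.mulLeft ℂ (b γ)) ∘ₗ L μ ν
          - q θ γ μ • ((LinearMap.mulLeft ℂ (b μ)) ∘ₗ L γ ν)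
          + q θ (γ + μ) ν • ((LinearMap.mulLeft ℂ (b ν)) ∘ₗ L γ μ)))
    -- the conformal derivations `𝒯_σ` of `so_θ(5,1)` on `O(S^7_θ)`
    (Tc : ℤ × ℤ → Module.End ℂ A)
    (hTcLeib : ∀ σ ∈ V, ∀ (m : ℤ × ℤ) (x y : A), x ∈ 𝒜 m →
      Tc σ (x * y) = Tc σ x * y + Q7 θ (dbl σ) m • (x * Tc σ y))
    -- `𝒯_σ^π = T_σ`, i.e. on `O(S^4_θ)` they give the sphere derivations
    (hTcval : ∀ σ ∈ V, ∀ τ ∈ V, Tc σ (b τ) = (if σ = -τ then 1 else 0) - b σ * b τ)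
    -- `Σ_τ b_τ* 𝒯_τ = 0`
    (hTcsum : (∑ τ ∈ V, (LinearMap.mulLeft ℂ (b (-τ))) ∘ₗ Tc τ) = 0)
    -- `[L_{μ,ν}, 𝒯_σ] = δ_{σ*ν} 𝒯_μ − λ^{2μ∧ν} δ_{σ*μ} 𝒯_ν`
    (hLT : ∀ μ ∈ V, ∀ ν ∈ V, ∀ σ ∈ V,
      L μ ν ∘ₗ Tc σ - q θ (μ + ν) σ • (Tc σ ∘ₗ L μ ν)
        = (if σ = -ν then (1:ℂ) else 0) • Tc μ
          - q θ μ ν • ((if σ = -μ then (1:ℂ) else 0) • Tc ν))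
    -- the curvature on generators, `Ω(T_μ,T_ν) = −Y_{μ,ν}`
    (Om : ℤ × ℤ → ℤ × ℤ → Module.End ℂ A)
    (hOm : ∀ μ ν, Om μ ν = - Y μ ν) :
    -- `(δ_σ Ω)(T_μ,T_ν) = [𝒯_σ, Ω(T_μ,T_ν)] − Ω([T_σ,T_μ],T_ν)
    --    + λ^{2μ∧ν} Ω([T_σ,T_ν],T_μ)
    --  = −2 b_σ Ω(T_μ,T_ν) − T_σ(b_μ) ω(𝒯_ν) + λ^{2μ∧ν} T_σ(b_ν) ω(𝒯_μ)`,
    -- where `ω(𝒯_ν) = 𝒯_ν − ρ(T_ν)` and `Ω([T_σ,T_μ],T_ν)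
    --    = b_σ Ω(T_μ,T_ν) − λ^{2σ∧μ} b_μ Ω(T_σ,T_ν)`
    ∀ σ ∈ V, ∀ μ ∈ V, ∀ ν ∈ V,
      (Tc σ ∘ₗ Om μ ν - q θ σ (μ + ν) • (Om μ ν ∘ₗ Tc σ))
        - ((LinearMap.mulLeft ℂ (b σ)) ∘ₗ Om μ ν
            - q θ σ μ • ((LinearMap.mulLeft ℂ (b μ)) ∘ₗ Om σ ν))
        + q θ μ ν • ((LinearMap.mulLeft ℂ (b σ)) ∘ₗ Om ν μ
            - q θ σ ν • ((LinearMap.mulLeft ℂ (b ν)) ∘ₗ Om σ μ))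
      = (-2 : ℂ) • ((LinearMap.mulLeft ℂ (b σ)) ∘ₗ Om μ ν)
        - (LinearMap.mulLeft ℂ (Tc σ (b μ))) ∘ₗ (Tc ν - rhoT ν)
        + q θ μ ν • ((LinearMap.mulLeft ℂ (Tc σ (b ν))) ∘ₗ (Tc μ - rhoT μ)) := by
  intro σ hσ μ hμ ν hν
  obtain rfl : rhoT = connection b L := funext hrho
  have hOm' : ∀ a ∈ V, ∀ c ∈ V, Om a c = curvature θ b L a c := fun a ha c hc => by
    rw [hOm, (hYdef a c).trans (sum_lmul_eq_L_sub_lmul_connection hsph hcomm ha hc), curvature]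
    abel
  have hTb : ∀ a ∈ V, braidedComm (q θ σ a) (Tc σ) (Algebra.lmul ℂ A (b a))
      = (if σ = -a then (1 : ℂ) else 0) • 1 - Algebra.lmul ℂ A (b σ) * Algebra.lmul ℂ A (b a) :=
    fun a ha => by rw [braidedComm_Tc_lmul_b 𝒜 hb hTcLeib hσ ha, lmul_Tc_b hTcval hσ ha]
  rw [hOm' μ hμ ν hν, hOm' σ hσ ν hν, hOm' ν hν μ hμ, hOm' σ hσ μ hμ]
  simp only [mulLeft_eq_lmul, lmul_Tc_b hTcval hσ hμ, lmul_Tc_b hTcval hσ hν]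
  exact curvature_variation hσ hμ hν hcomm hanti hTb
    (fun a ha c hc => braidedComm_Tc_L hLT hσ ha hc) hTcsum

theorem conformal_variation_of_curvature
    (θ : ℝ)
    (A : Type*) [Ring A] [Algebra ℂ A]
    (𝒜 : ℤ × ℤ → Submodule ℂ A) [GradedAlgebra 𝒜]
    -- generators `b_μ` of the coinvariant subalgebra `O(S^4_θ)` (`b_μ* = b_{−μ}`)
    (b : ℤ × ℤ → A)
    (hb : ∀ μ ∈ V, b μ ∈ 𝒜 (dbl μ))
    (hcomm : ∀ μ ∈ V, ∀ ν ∈ V, b μ * b ν = q θ μ ν • (b ν * b μ))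
    (hsph : ∑ μ ∈ V, b (-μ) * b μ = 1)
    -- the `O(SU(2))`-equivariant braided derivations `L_{μ,ν}` of `O(S^7_θ)`
    (L : ℤ × ℤ → ℤ × ℤ → Module.End ℂ A)
    (hanti : ∀ μ ∈ V, ∀ ν ∈ V, L μ ν = -(q θ μ ν) • L ν μ)
    (hLval : ∀ μ ∈ V, ∀ ν ∈ V, ∀ σ ∈ V,
      L μ ν (b σ) = (if σ = -ν then (1:ℂ) else 0) • b μ
        - q θ μ ν • ((if σ = -μ then (1:ℂ) else 0) • b ν))
    (hLeib : ∀ μ ∈ V, ∀ ν ∈ V, ∀ (m : ℤ × ℤ) (x y : A), x ∈ 𝒜 m →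
      L μ ν (x * y) = L μ ν x * y + Q7 θ (dbl μ + dbl ν) m • (x * L μ ν y))
    -- the `so_θ(5)` relations
    (hLrel : ∀ μ ∈ V, ∀ ν ∈ V, ∀ τ ∈ V, ∀ σ ∈ V,
      L μ ν ∘ₗ L τ σ - q θ (μ + ν) (τ + σ) • (L τ σ ∘ₗ L μ ν)
        = (if τ = -ν then (1:ℂ) else 0) • L μ σ
          - q θ μ ν • ((if τ = -μ then (1:ℂ) else 0) • L ν σ)
          - q θ τ σ • ((if σ = -ν then (1:ℂ) else 0) • L μ τ
              - q θ μ ν • ((if σ = -μ then (1:ℂ) else 0) • L ν τ)))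
    -- the horizontal lifts `ρ(T_ν) := Σ_μ b_μ* L_{μ,ν}`
    (rhoT : ℤ × ℤ → Module.End ℂ A)
    (hrho : ∀ ν, rhoT ν = ∑ μ ∈ V, (LinearMap.mulLeft ℂ (b (-μ))) ∘ₗ L μ ν)
    -- the vertical (gauge) generators `Y_{μ,ν}`
    (Y : ℤ × ℤ → ℤ × ℤ → Module.End ℂ A)
    (hYdef : ∀ μ ν, Y μ ν = ∑ γ ∈ V,
      (LinearMap.mulLeft ℂ (b (-γ))) ∘ₗ
        ((LinearMap.mulLeft ℂ (b γ)) ∘ₗ L μ ν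
          - q θ γ μ • ((LinearMap.mulLeft ℂ (b μ)) ∘ₗ L γ ν)
          + q θ (γ + μ) ν • ((LinearMap.mulLeft ℂ (b ν)) ∘ₗ L γ μ)))
    -- the conformal derivations `𝒯_σ` of `so_θ(5,1)` on `O(S^7_θ)`
    (Tc : ℤ × ℤ → Module.End ℂ A)
    (hTcLeib : ∀ σ ∈ V, ∀ (m : ℤ × ℤ) (x y : A), x ∈ 𝒜 m →
      Tc σ (x * y) = Tc σ x * y + Q7 θ (dbl σ) m • (x * Tc σ y))
    -- `𝒯_σ^π = T_σ`, i.e. on `O(S^4_θ)` they give the sphere derivations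
    (hTcval : ∀ σ ∈ V, ∀ τ ∈ V, Tc σ (b τ) = (if σ = -τ then 1 else 0) - b σ * b τ)
    -- `Σ_τ b_τ* 𝒯_τ = 0`
    (hTcsum : (∑ τ ∈ V, (LinearMap.mulLeft ℂ (b (-τ))) ∘ₗ Tc τ) = 0)
    -- `[𝒯_μ, 𝒯_ν] = L_{μ,ν}`
    (hTT : ∀ μ ∈ V, ∀ ν ∈ V, Tc μ ∘ₗ Tc ν - q θ μ ν • (Tc ν ∘ₗ Tc μ) = L μ ν)
    -- `[L_{μ,ν}, 𝒯_σ] = δ_{σ*ν} 𝒯_μ − λ^{2μ∧ν} δ_{σ*μ} 𝒯_ν`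
    (hLT : ∀ μ ∈ V, ∀ ν ∈ V, ∀ σ ∈ V,
      L μ ν ∘ₗ Tc σ - q θ (μ + ν) σ • (Tc σ ∘ₗ L μ ν)
        = (if σ = -ν then (1:ℂ) else 0) • Tc μ
          - q θ μ ν • ((if σ = -μ then (1:ℂ) else 0) • Tc ν))
    -- the curvature on generators, `Ω(T_μ,T_ν) = −Y_{μ,ν}`
    (Om : ℤ × ℤ → ℤ × ℤ → Module.End ℂ A)
    (hOm : ∀ μ ν, Om μ ν = - Y μ ν) :
    -- `(δ_σ Ω)(T_μ,T_ν) = [𝒯_σ, Ω(T_μ,T_ν)] − Ω([T_σ,T_μ],T_ν)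
    --    + λ^{2μ∧ν} Ω([T_σ,T_ν],T_μ)
    --  = −2 b_σ Ω(T_μ,T_ν) − T_σ(b_μ) ω(𝒯_ν) + λ^{2μ∧ν} T_σ(b_ν) ω(𝒯_μ)`,
    -- where `ω(𝒯_ν) = 𝒯_ν − ρ(T_ν)` and `Ω([T_σ,T_μ],T_ν)
    --    = b_σ Ω(T_μ,T_ν) − λ^{2σ∧μ} b_μ Ω(T_σ,T_ν)`
    ∀ σ ∈ V, ∀ μ ∈ V, ∀ ν ∈ V,
      (Tc σ ∘ₗ Om μ ν - q θ σ (μ + ν) • (Om μ ν ∘ₗ Tc σ))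
        - ((LinearMap.mulLeft ℂ (b σ)) ∘ₗ Om μ ν
            - q θ σ μ • ((LinearMap.mulLeft ℂ (b μ)) ∘ₗ Om σ ν))
        + q θ μ ν • ((LinearMap.mulLeft ℂ (b σ)) ∘ₗ Om ν μ
            - q θ σ ν • ((LinearMap.mulLeft ℂ (b ν)) ∘ₗ Om σ μ))
      = (-2 : ℂ) • ((LinearMap.mulLeft ℂ (b σ)) ∘ₗ Om μ ν)
        - (LinearMap.mulLeft ℂ (Tc σ (b μ))) ∘ₗ (Tc ν - rhoT ν)
        + q θ μ ν • ((LinearMap.mulLeft ℂ (Tc σ (b ν))) ∘ₗ (Tc μ - rhoT μ)) :=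
  conformal_variation_of_curvature_general θ A 𝒜 b hb hcomm hsph L hanti rhoT hrho Y hYdef Tc
    hTcLeib hTcval hTcsum hLT Om hOm

end Statement10
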